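/- Let B be the closed unit ball of ℓ² and let 𝐞 = {e_n}_{n∈ℕ} be its standard orthonormal basis. Then R_1(𝐞, B) = {x ∈ ℓ² : Σ_{n∈ℕ} |x(n)| ≤ 1} (the unit ball of ℓ¹ viewed as a subset of ℓ²), and this set has empty interior in ℓ². -/

import Mathlib

/-!
A vector supported on a single coordinate lies in the closed unit ball exactly when it is `t • eₙ`
with `|t| ≤ 1`, so `R₁(𝐞, B)` is the closed convex hull of the segments `[-eₙ, eₙ]`. That hull lies
in the `ℓ¹` unit ball, which is convex and closed in `ℓ²`. Conversely, every finite truncation of a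
point of the `ℓ¹` unit ball is a convex combination of points of these segments and `0`, and the
truncations converge in `ℓ²`.

The `ℓ¹` unit ball has empty interior since `δ (e₀ + ⋯ + eₖ₋₁)` has `ℓ²` norm `δ √k` but `ℓ¹`
norm `δ k`: no `ℓ²` ball, however small, fits inside a set of bounded `ℓ¹` diameter.
-/

open Set

/-- The `k`-cross approximation of `C ⊆ H` with respect to the orthonormal system `E`:
the closed convex hull of `C ∩ ⋃_{S ∈ [E]_k} F(S)`. -/
noncomputable def kCrossH {H : Type*} [NormedAddCommGroup H] [InnerProductSpace ℝ H]
    (E : Set H) (k : ℕ) (C : Set H) : Set H :=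
  closure (convexHull ℝ (C ∩ ⋃ S ∈ {S : Set H | S ⊆ E ∧ S.Finite ∧ S.ncard = k},
    ((Submodule.span ℝ S).topologicalClosure : Set H)))

/-- The real Hilbert space `ℓ²`. -/
noncomputable abbrev ellTwo : Type := lp (fun _ : ℕ => ℝ) 2

/-- The standard orthonormal basis vectors of `ℓ²`. -/
noncomputable def stdBasis (n : ℕ) : ellTwo := lp.single 2 n (1 : ℝ)

open scoped ENNReal

section l1UnitBall

variable {ι : Type*} {p : ℝ≥0∞}

def l1UnitBall (ι : Type*) (p : ℝ≥0∞) : Set (lp (fun _ : ι => ℝ) p) :=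
  {x | ∑' i, (‖x i‖₊ : ℝ≥0∞) ≤ 1}

theorem mem_l1UnitBall_iff {x : lp (fun _ : ι => ℝ) p} :
    x ∈ l1UnitBall ι p ↔ ∀ s : Finset ι, ∑ i ∈ s, ‖x i‖ ≤ 1 := by
  simp only [l1UnitBall, mem_ofPred_eq, ENNReal.tsum_eq_iSup_sum, iSup_le_iff]
  refine forall_congr' fun s => ?_
  rw [← ENNReal.ofNNReal_finsetSum, ENNReal.coe_le_one_iff, ← NNReal.coe_le_coe, NNReal.coe_sum,
    NNReal.coe_one]
  simp only [coe_nnnorm]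

theorem isClosed_l1UnitBall [Fact (1 ≤ p)] : IsClosed (l1UnitBall ι p) := by
  have h : l1UnitBall ι p = ⋂ s : Finset ι, {x | ∑ i ∈ s, ‖x i‖ ≤ 1} := by
    ext x
    simp [mem_l1UnitBall_iff]
  rw [h]
  exact isClosed_iInter fun s => isClosed_le
    (continuous_finsetSum _ fun i _ => (lp.lipschitzWith_one_eval p i).continuous.norm)
    continuous_const

theorem convex_l1UnitBall [Fact (1 ≤ p)] : Convex ℝ (l1UnitBall ι p) := by
  intro x hx y hy a b ha hb hab
  rw [mem_l1UnitBall_iff] at hx hy ⊢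
  intro s
  calc ∑ i ∈ s, ‖(a • x + b • y) i‖ ≤ ∑ i ∈ s, (a * ‖x i‖ + b * ‖y i‖) :=
        Finset.sum_le_sum fun i _ => (norm_add_le (a * x i) (b * y i)).trans_eq
          (by simp [abs_of_nonneg ha, abs_of_nonneg hb])
    _ = a * ∑ i ∈ s, ‖x i‖ + b * ∑ i ∈ s, ‖y i‖ := by
        rw [Finset.sum_add_distrib, Finset.mul_sum, Finset.mul_sum]
    _ ≤ a * 1 + b * 1 := by gcongr; exacts [hx s, hy s]
    _ = 1 := by rw [mul_one, mul_one, hab]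

theorem sum_norm_sub_le_two_of_mem_l1UnitBall [Fact (1 ≤ p)] {x y : lp (fun _ : ι => ℝ) p}
    (hx : x ∈ l1UnitBall ι p) (hy : y ∈ l1UnitBall ι p) (s : Finset ι) :
    ∑ i ∈ s, ‖y i - x i‖ ≤ 2 :=
  calc ∑ i ∈ s, ‖y i - x i‖ ≤ ∑ i ∈ s, (‖y i‖ + ‖x i‖) :=
        Finset.sum_le_sum fun _ _ => norm_sub_le _ _
    _ = ∑ i ∈ s, ‖y i‖ + ∑ i ∈ s, ‖x i‖ := Finset.sum_add_distrib
    _ ≤ 1 + 1 := add_le_add (mem_l1UnitBall_iff.1 hy s) (mem_l1UnitBall_iff.1 hx s)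
    _ = 2 := one_add_one_eq_two

end l1UnitBall

theorem Convex.sum_smul_mem_of_sum_le_one {R E ι : Type*} [Field R] [LinearOrder R]
    [IsStrictOrderedRing R] [AddCommGroup E] [Module R E] {s : Set E} (hs : Convex R s)
    (h₀ : (0 : E) ∈ s) {t : Finset ι} {w : ι → R} {z : ι → E} (hw₀ : ∀ i ∈ t, 0 ≤ w i)
    (hw₁ : ∑ i ∈ t, w i ≤ 1) (hz : ∀ i ∈ t, z i ∈ s) : ∑ i ∈ t, w i • z i ∈ s := by
  rcases (Finset.sum_nonneg hw₀).eq_or_lt with hw | hw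
  · have hw0 := (Finset.sum_eq_zero_iff_of_nonneg hw₀).1 hw.symm
    rwa [Finset.sum_eq_zero fun i hi => by rw [hw0 i hi, zero_smul]]
  · rw [← smul_inv_smul₀ hw.ne' (∑ i ∈ t, w i • z i)]
    exact hs.smul_mem_of_zero_mem h₀ (hs.centerMass_mem hw₀ hw hz) ⟨hw.le, hw₁⟩

theorem biUnion_ncard_eq_one_topologicalClosure_span {H : Type*} [NormedAddCommGroup H]
    [NormedSpace ℝ H] (E : Set H) :
    ⋃ S ∈ {S : Set H | S ⊆ E ∧ S.Finite ∧ S.ncard = 1},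
      ((Submodule.span ℝ S).topologicalClosure : Set H) = ⋃ v ∈ E, ((ℝ ∙ v) : Set H) := by
  ext x
  simp only [mem_iUnion₂, mem_ofPred_eq]
  constructor
  · rintro ⟨S, ⟨hSE, -, hS⟩, hx⟩
    obtain ⟨v, rfl⟩ := ncard_eq_one.1 hS
    rw [Submodule.topologicalClosure_coe, (Submodule.closed_of_finiteDimensional _).closure_eq]
      at hx
    exact ⟨v, hSE rfl, hx⟩
  · rintro ⟨v, hv, hx⟩
    exact ⟨{v}, ⟨singleton_subset_iff.2 hv, finite_singleton v, ncard_singleton v⟩,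
      Submodule.le_topologicalClosure _ hx⟩

theorem norm_stdBasis (n : ℕ) : ‖stdBasis n‖ = 1 :=
  (lp.norm_single (by norm_num) n 1).trans norm_one

theorem smul_stdBasis_mem_l1UnitBall {t : ℝ} (ht : |t| ≤ 1) (n : ℕ) :
    t • stdBasis n ∈ l1UnitBall ℕ 2 := by
  rw [mem_l1UnitBall_iff]
  intro s
  simp only [stdBasis, lp.coeFn_smul, Pi.smul_apply, lp.single_apply, Pi.single_apply, smul_eq_mul,
    mul_ite, mul_one, mul_zero, Real.norm_eq_abs, apply_ite (|·|), abs_zero, Finset.sum_ite_eq']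
  split_ifs <;> linarith [abs_nonneg t]

def stdBasisSegments : Set ellTwo := {x | ∃ n, ∃ t : ℝ, |t| ≤ 1 ∧ t • stdBasis n = x}

theorem smul_stdBasis_mem_stdBasisSegments {t : ℝ} (ht : |t| ≤ 1) (n : ℕ) :
    t • stdBasis n ∈ stdBasisSegments :=
  ⟨n, t, ht, rfl⟩

theorem closedBall_inter_span_stdBasis :
    Metric.closedBall (0 : ellTwo) 1 ∩ ⋃ v ∈ range stdBasis, ((ℝ ∙ v) : Set ellTwo) =
      stdBasisSegments := by
  ext x
  simp only [biUnion_range, stdBasisSegments, mem_inter_iff, Metric.mem_closedBall,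
    dist_zero_right, mem_iUnion, SetLike.mem_coe, Submodule.mem_span_singleton, mem_ofPred_eq]
  constructor
  · rintro ⟨hx, n, t, rfl⟩
    refine ⟨n, t, ?_, rfl⟩
    simpa [norm_smul, norm_stdBasis] using hx
  · rintro ⟨n, t, ht, rfl⟩
    exact ⟨by simpa [norm_smul, norm_stdBasis] using ht, n, t, rfl⟩

theorem stdBasisSegments_subset_l1UnitBall : stdBasisSegments ⊆ l1UnitBall ℕ 2 := by
  rintro _ ⟨n, t, ht, rfl⟩
  exact smul_stdBasis_mem_l1UnitBall ht n

theorem sum_smul_stdBasis_mem_convexHull (s : Finset ℕ) (a : ℕ → ℝ)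
    (ha : ∑ n ∈ s, |a n| ≤ 1) :
    ∑ n ∈ s, a n • stdBasis n ∈ convexHull ℝ stdBasisSegments := by
  have hsign (n : ℕ) : a n • stdBasis n = |a n| • ((SignType.sign (a n) : ℝ) • stdBasis n) := by
    rw [smul_smul, abs_mul_sign]
  have hzero : (0 : ellTwo) ∈ stdBasisSegments := by
    simpa using smul_stdBasis_mem_stdBasisSegments (t := 0) (by simp) 0
  simp_rw [hsign]
  refine (convex_convexHull ℝ _).sum_smul_mem_of_sum_le_one (subset_convexHull ℝ _ hzero)
    (fun n _ => abs_nonneg _) ha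
    fun n _ => subset_convexHull ℝ _ (smul_stdBasis_mem_stdBasisSegments ?_ n)
  rcases SignType.sign (a n) with _ | _ | _ <;> simp

theorem l1UnitBall_subset_closure_convexHull :
    l1UnitBall ℕ 2 ⊆ closure (convexHull ℝ stdBasisSegments) := by
  intro x hx
  refine mem_closure_of_tendsto (lp.hasSum_single (by norm_num) x)
    (Filter.Eventually.of_forall fun s => ?_)
  simpa [stdBasis, ← lp.single_smul] using
    sum_smul_stdBasis_mem_convexHull s x (by simpa using mem_l1UnitBall_iff.1 hx s)

theorem kCrossH_stdBasis_one_closedBall :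
    kCrossH (range stdBasis) 1 (Metric.closedBall 0 1) = l1UnitBall ℕ 2 := by
  rw [kCrossH, biUnion_ncard_eq_one_topologicalClosure_span, closedBall_inter_span_stdBasis]
  exact (closure_minimal (convexHull_min stdBasisSegments_subset_l1UnitBall convex_l1UnitBall)
    isClosed_l1UnitBall).antisymm l1UnitBall_subset_closure_convexHull

theorem sum_range_stdBasis_apply {k m : ℕ} (hm : m < k) :
    (∑ n ∈ Finset.range k, stdBasis n) m = 1 := by
  rw [lp.coeFn_sum, Finset.sum_apply]
  simp [stdBasis, Pi.single_apply, hm]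

theorem norm_sum_range_stdBasis (k : ℕ) : ‖∑ n ∈ Finset.range k, stdBasis n‖ = √k := by
  have h := lp.norm_sum_single (p := 2) (by norm_num) (fun _ : ℕ => (1 : ℝ)) (Finset.range k)
  simp only [ENNReal.toReal_ofNat, Real.rpow_ofNat, norm_one, one_pow, Finset.sum_const,
    Finset.card_range, nsmul_eq_mul, mul_one] at h
  rw [← h, Real.sqrt_sq (norm_nonneg _)]
  rfl

theorem interior_l1UnitBall : interior (l1UnitBall ℕ 2) = ∅ := by
  refine eq_empty_iff_forall_notMem.2 fun x hx => ?_
  obtain ⟨ε, hε, hball⟩ := Metric.isOpen_iff.1 isOpen_interior x hx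
  obtain ⟨k, hk⟩ := exists_nat_gt ((4 / ε) ^ 2)
  have hεk : 4 < ε * √k := by
    have := (Real.lt_sqrt (by positivity)).2 hk
    rwa [div_lt_iff₀' hε] at this
  have hk0 : 0 < √k := by nlinarith
  set δ := ε / (2 * √k) with hδ
  set z := ∑ n ∈ Finset.range k, stdBasis n
  have hz (n : ℕ) (hn : n < k) : z n = 1 := sum_range_stdBasis_apply hn
  have hy : x + δ • z ∈ l1UnitBall ℕ 2 := interior_subset <| hball <| by
    rw [Metric.mem_ball, dist_self_add_left, norm_smul, norm_sum_range_stdBasis, Real.norm_eq_abs,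
      abs_of_pos (by positivity), hδ]
    field_simp
    linarith
  have hkδ : (k : ℝ) * δ = ε * √k / 2 := by
    rw [hδ]
    field_simp
    exact (Real.sq_sqrt (Nat.cast_nonneg k)).symm
  have hkδ_le : (k : ℝ) * δ ≤ 2 :=
    calc (k : ℝ) * δ = ∑ n ∈ Finset.range k, δ := by simp
      _ = ∑ n ∈ Finset.range k, ‖(x + δ • z) n - x n‖ := Finset.sum_congr rfl fun n hn => by
          rw [lp.coeFn_add, lp.coeFn_smul, Pi.add_apply, Pi.smul_apply,
            hz n (Finset.mem_range.1 hn), smul_eq_mul, mul_one, add_sub_cancel_left,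
            Real.norm_of_nonneg (by positivity)]
      _ ≤ 2 := sum_norm_sub_le_two_of_mem_l1UnitBall (interior_subset hx) hy _
  linarith

/-- For the closed unit ball `B` of `ℓ²` and its standard orthonormal basis `𝐞`,
`R_1(𝐞, B)` is the unit ball of `ℓ¹` viewed inside `ℓ²`, and it has empty interior. -/
theorem stmt_17 :
    kCrossH (Set.range stdBasis) 1 (Metric.closedBall (0 : ellTwo) 1) =
      {x : ellTwo | ∑' n : ℕ, (‖x n‖₊ : ENNReal) ≤ 1} ∧
    interior (kCrossH (Set.range stdBasis) 1 (Metric.closedBall (0 : ellTwo) 1)) = ∅ := by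
  rw [kCrossH_stdBasis_one_closedBall]
  exact ⟨rfl, interior_l1UnitBall⟩
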